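/- Let G be a group of nilpotency class at most 2 with R-exponentiation satisfying F3 (with α-commutators central). Then for all g, h, f ∈ G and α ∈ R, associativity of multiplication yields the cocycle relation on α-commutators: (gh, f)_α · (g, h)_α = (g, hf)_α · (h, f)_α. -/

import Mathlib

/-- The paper's commutator convention: [g,h] = g⁻¹h⁻¹gh. -/
def pcomm {G : Type*} [Group G] (g h : G) : G := g⁻¹ * h⁻¹ * g * h

/-- The α-commutator (g,h)_α = h^{-α} g^{-α} (gh)^α, with g^{-α} := (g^α)⁻¹. -/
def acomm {G R : Type*} [Group G] (e : G → R → G) (g h : G) (α : R) : G :=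
  (e h α)⁻¹ * (e g α)⁻¹ * e (g * h) α

/-- The c-commutator c(g,h)_α = [g,h]^{C(α,2)} (g,h)_α, where C2 α plays the role of C(α,2). -/
def ccomm {G R : Type*} [Group G] (e : G → R → G) (C2 : R → R) (g h : G) (α : R) : G :=
  e (pcomm g h) (C2 α) * acomm e g h α

/-! Both sides of the cocycle relation measure how far `(g h f)^α` is from `g^α h^α f^α`: they
differ only in whether `(g h f)^α` is reached through `(g h)^α` or through `(h f)^α`, and
centrality lets the α-commutator produced first be moved out of the way. -/

section

variable {G R : Type*} [Group G] (e : G → R → G) (g h f : G) (α : R)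

def acomm₃ : G := (e f α)⁻¹ * (e h α)⁻¹ * (e g α)⁻¹ * e (g * h * f) α

theorem mul_mul_acomm : e g α * e h α * acomm e g h α = e (g * h) α := by
  simp [acomm, mul_assoc]

theorem eq_acomm₃_iff {x : G} :
    x = acomm₃ e g h f α ↔ e g α * e h α * e f α * x = e (g * h * f) α := by
  rw [acomm₃, ← eq_inv_mul_iff_mul_eq]
  simp only [mul_inv_rev, mul_assoc]

theorem acomm_mul_mul_acomm_eq_acomm₃ (hc : acomm e g h α ∈ Subgroup.center G) :
    acomm e (g * h) f α * acomm e g h α = acomm₃ e g h f α := by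
  rw [eq_acomm₃_iff]
  calc e g α * e h α * e f α * (acomm e (g * h) f α * acomm e g h α)
      = e g α * e h α * acomm e g h α * (e f α * acomm e (g * h) f α) := by
        rw [mul_assoc _ (acomm e g h α), ← Subgroup.mem_center_iff.mp hc]; simp only [mul_assoc]
    _ = e (g * h * f) α := by
        rw [mul_mul_acomm, ← mul_assoc, mul_mul_acomm]

theorem acomm_mul_acomm_mul_eq_acomm₃ (hc : acomm e g (h * f) α ∈ Subgroup.center G) :
    acomm e g (h * f) α * acomm e h f α = acomm₃ e g h f α := by
  rw [eq_acomm₃_iff]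
  calc e g α * e h α * e f α * (acomm e g (h * f) α * acomm e h f α)
      = e g α * (e h α * e f α * acomm e h f α) * acomm e g (h * f) α := by
        rw [← Subgroup.mem_center_iff.mp hc]; simp only [mul_assoc]
    _ = e (g * h * f) α := by
        rw [mul_mul_acomm, mul_mul_acomm, mul_assoc]

end

theorem stmt7_general {G R : Type*} [Group G] (e : G → R → G)
    (hcent : ∀ (g h : G) (α : R), acomm e g h α ∈ Subgroup.center G) :
    ∀ (g h f : G) (α : R),
      acomm e (g * h) f α * acomm e g h α = acomm e g (h * f) α * acomm e h f α := by
  intro g h f α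
  rw [acomm_mul_mul_acomm_eq_acomm₃ e g h f α (hcent g h α),
    acomm_mul_acomm_mul_eq_acomm₃ e g h f α (hcent g (h * f) α)]

theorem stmt7 {G R : Type*} [Group G] [CommRing R] (e : G → R → G)
    (hnil : ∀ g h : G, pcomm g h ∈ Subgroup.center G)
    (hcent : ∀ (g h : G) (α : R), acomm e g h α ∈ Subgroup.center G) :
    ∀ (g h f : G) (α : R),
      acomm e (g * h) f α * acomm e g h α = acomm e g (h * f) α * acomm e h f α :=
  stmt7_general e hcent
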